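/- Let A ∈ ℝ^{n×n}, B, R ∈ ℝ^{n×1}, C ∈ ℝ^{1×n}, and suppose (A,B) is controllable. If C (A + B F)^{k} R = 0 for every integer k ≥ 0 and every row vector F ∈ ℝ^{1×n}, then R C = 0, i.e., R = 0 or C = 0. -/

import Mathlib

/-- The controllability matrix `[B, AB, …, A^{n-1}B]` of a single-input pair `(A, B)`. -/
def ctrbMatrix {n : ℕ} (A : Matrix (Fin n) (Fin n) ℝ) (B : Matrix (Fin n) (Fin 1) ℝ) :
    Matrix (Fin n) (Fin n) ℝ :=
  Matrix.of fun i k => (A ^ (k : ℕ) * B) i 0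

/-- `(A, B)` is controllable if its controllability matrix has full rank. -/
def Controllable {n : ℕ} (A : Matrix (Fin n) (Fin n) ℝ) (B : Matrix (Fin n) (Fin 1) ℝ) : Prop :=
  (ctrbMatrix A B).rank = n

/-!
If `C A^j B = 0` for all `j < m`, the feedback term never reaches `C`, so `C (A + BF)^m = C A^m`
for every `F`, and one more step gives `C (A + BF)^(m+1) R = C A^(m+1) R + (C A^m B)(F R)`.
The hypothesis at `F = 0` kills the first term; if `R ≠ 0` some `F` has `F R ≠ 0`, which forces
`C A^m B = 0`. By induction `C` annihilates every column `A^m B`, hence the controllability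
matrix, which is invertible, so `C = 0`.
-/

namespace Matrix

variable {ι p q K : Type*}

theorem isUnit_of_rank_eq_card [Fintype ι] [DecidableEq ι] [Field K] {M : Matrix ι ι K}
    (h : M.rank = Fintype.card ι) : IsUnit M := by
  rw [← mulVec_surjective_iff_isUnit]
  refine (LinearMap.range_eq_top (f := M.mulVecLin)).mp (Submodule.eq_top_of_finrank_eq ?_)
  simpa [rank] using h

theorem mul_add_mul_pow_eq_mul_pow [Fintype ι] [DecidableEq ι] [Fintype p] [Semiring K]
    {A : Matrix ι ι K} {B : Matrix ι p K} {C : Matrix q ι K} (F : Matrix p ι K) {m : ℕ}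
    (hCB : ∀ j < m, C * A ^ j * B = 0) : C * (A + B * F) ^ m = C * A ^ m := by
  induction m with
  | zero => simp
  | succ m ih =>
    calc C * (A + B * F) ^ (m + 1) = C * A ^ m * (A + B * F) := by
          rw [pow_succ, ← Matrix.mul_assoc, ih fun j hj => hCB j (by omega)]
      _ = C * A ^ (m + 1) + C * A ^ m * B * F := by
          simp only [Matrix.mul_add, pow_succ, Matrix.mul_assoc]
      _ = C * A ^ (m + 1) := by rw [hCB m m.lt_succ_self, Matrix.zero_mul, add_zero]

theorem eq_zero_of_mul_apply_eq_zero [Field K] {X Y : Matrix (Fin 1) (Fin 1) K}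
    (hXY : (X * Y) 0 0 = 0) (hY : Y 0 0 ≠ 0) : X = 0 := by
  have h00 : X 0 0 * Y 0 0 = 0 := by simpa [mul_apply] using hXY
  ext i j
  rw [Subsingleton.elim i 0, Subsingleton.elim j 0]
  exact (mul_eq_zero.mp h00).resolve_right hY

end Matrix

open Matrix

theorem mul_pow_mul_eq_zero_of_forall_feedback {ι K : Type*} [Fintype ι] [DecidableEq ι]
    [Field K] {A : Matrix ι ι K} {B R : Matrix ι (Fin 1) K} {C : Matrix (Fin 1) ι K} (hR : R ≠ 0)
    (h : ∀ (k : ℕ) (F : Matrix (Fin 1) ι K), (C * (A + B * F) ^ k * R) 0 0 = 0) (m : ℕ) :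
    C * A ^ m * B = 0 := by
  obtain ⟨i, hi⟩ : ∃ i, R i 0 ≠ 0 := by
    by_contra! hzero
    exact hR (by ext i j; rw [Subsingleton.elim j 0]; exact hzero i)
  induction m using Nat.strong_induction_on with
  | _ m ih =>
  set F : Matrix (Fin 1) ι K := single 0 i 1
  have hFR : (F * R) 0 0 = R i 0 := by simp [F]
  have hfree : (C * A ^ (m + 1) * R) 0 0 = 0 := by simpa using h (m + 1) 0
  have hexpand :
      C * (A + B * F) ^ (m + 1) * R = C * A ^ (m + 1) * R + C * A ^ m * B * (F * R) := by
    rw [pow_succ, ← Matrix.mul_assoc, mul_add_mul_pow_eq_mul_pow F ih]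
    simp only [pow_succ, Matrix.mul_add, Matrix.add_mul, Matrix.mul_assoc]
  refine eq_zero_of_mul_apply_eq_zero ?_ (hFR ▸ hi)
  simpa [hexpand, hfree] using h (m + 1) F

theorem mul_ctrbMatrix_eq_zero {q : Type*} {n : ℕ} {A : Matrix (Fin n) (Fin n) ℝ}
    {B : Matrix (Fin n) (Fin 1) ℝ} {C : Matrix q (Fin n) ℝ}
    (hCB : ∀ k : ℕ, C * A ^ k * B = 0) :
    C * ctrbMatrix A B = 0 := by
  ext a k
  have hk := congrFun (congrFun (hCB k) a) 0
  rw [Matrix.mul_assoc, mul_apply] at hk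
  rw [mul_apply]
  exact hk

theorem Controllable.eq_zero_of_mul_ctrbMatrix_eq_zero {q : Type*} {n : ℕ}
    {A : Matrix (Fin n) (Fin n) ℝ} {B : Matrix (Fin n) (Fin 1) ℝ} {C : Matrix q (Fin n) ℝ}
    (hctrb : Controllable A B) (hC : C * ctrbMatrix A B = 0) : C = 0 := by
  have hdet : IsUnit (ctrbMatrix A B).det :=
    isUnit_iff_isUnit_det _ |>.mp (isUnit_of_rank_eq_card (by rw [Fintype.card_fin]; exact hctrb))
  rw [← mul_nonsing_inv_cancel_right _ C hdet, hC, Matrix.zero_mul]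

theorem stmt9 (n : ℕ) (A : Matrix (Fin n) (Fin n) ℝ) (B R : Matrix (Fin n) (Fin 1) ℝ)
    (C : Matrix (Fin 1) (Fin n) ℝ)
    (hctrb : Controllable A B)
    (h : ∀ (k : ℕ) (F : Matrix (Fin 1) (Fin n) ℝ), (C * (A + B * F) ^ k * R) 0 0 = 0) :
    R * C = 0 ∧ (R = 0 ∨ C = 0) := by
  by_cases hR : R = 0
  · simp [hR]
  have hC : C = 0 := hctrb.eq_zero_of_mul_ctrbMatrix_eq_zero
    (mul_ctrbMatrix_eq_zero (mul_pow_mul_eq_zero_of_forall_feedback hR h))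
  simp [hC]
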